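/- Let ρ > 2 be a real number and M an integer. Let Φ_{M,ρ} be the set of all α ∈ O_∞ for which there exists a sequence f_n, g_n ∈ F_q[t] with g_n ≠ 0 such that f_n/g_n → α in K_∞ and |α − f_n/g_n| < q^{−M}/|g_n|^ρ for all n. Then Φ_{M,ρ} is μ-null for every Haar measure μ on K_∞ = F_q((1/t)). (This is the case A = F_q[t] of Theorem 1.2 of the paper, showing the exponent 2 in the approximation condition is optimal.) -/

import Mathlib

/-!
An irrational `α ∈ Φ_{M,ρ}` has approximations `f/g` with `deg g` unbounded (a limit of fractions
of bounded height lies in a finite, hence closed, set of fractions), so it lies in infinitely many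
of the sets `A_e`, the union of the balls `|x - f/g| < q ^ (-M - ρ e)` over `deg f, deg g ≤ e`.
The unit ball `O_∞` contains `q ^ (m + 1)` disjoint translates of a ball of radius `q ^ (-m)`, so
such a ball has Haar measure at most `μ(O_∞) q ^ (-m - 1)` and `μ(A_e) ≲ q ^ ((2 - ρ) e)`. For
`ρ > 2` this is summable and Borel–Cantelli makes `limsup A_e` null; the remaining rational points
are countable, and Haar measure has no atoms by the same ball estimate.
-/

open FunctionField Filter Polynomial MeasureTheory
open scoped Multiplicative

variable (Fq : Type) [Field Fq] [Fintype Fq] [DecidableEq (RatFunc Fq)]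

/-- The real absolute value attached to a `ℤₘ₀`-valued valuation with base `q`:
`Multiplicative.ofAdd n ↦ q ^ n` and `0 ↦ 0`. -/
noncomputable def zabs (q : ℕ) (x : WithZero (Multiplicative ℤ)) : ℝ :=
  if hx : x = 0 then 0 else (q : ℝ) ^ Multiplicative.toAdd (WithZero.unzero hx)

/-- The absolute value `|h| = q ^ (-ν_∞ h)` on `K_∞ = F_q((1/t))`. -/
noncomputable def absInfty (q : ℕ) (h : RatFunc.CompletionAtInfty Fq) : ℝ :=
  zabs q (Valued.v h)

/-- The embedding of the polynomial ring `F_q[t]` into `K_∞ = F_q((1/t))`. -/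
noncomputable def polyToInfty (p : Polynomial Fq) : RatFunc.CompletionAtInfty Fq :=
  letI := RatFunc.inftyValued Fq
  UniformSpace.Completion.coe' (α := RatFunc Fq) (algebraMap (Polynomial Fq) (RatFunc Fq) p)

/-- The valuation ring `O_∞ = {α ∈ K_∞ : |α| ≤ 1}`. -/
def Oinfty (q : ℕ) : Set (RatFunc.CompletionAtInfty Fq) := {α | absInfty Fq q α ≤ 1}

noncomputable instance : MeasurableSpace (RatFunc.CompletionAtInfty Fq) := borel _

instance : BorelSpace (RatFunc.CompletionAtInfty Fq) := ⟨rfl⟩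

/-- A Haar measure on `K_∞`: a Borel measure invariant under all additive translations,
positive and finite on `O_∞`. -/
def IsHaar (q : ℕ) (μ : Measure (RatFunc.CompletionAtInfty Fq)) : Prop :=
  (∀ x : RatFunc.CompletionAtInfty Fq, μ.map (fun y => y + x) = μ) ∧
    0 < μ (Oinfty Fq q) ∧ μ (Oinfty Fq q) < ⊤


open scoped ENNReal
open WithZero

instance Polynomial.instCountable {R : Type*} [Semiring R] [Countable R] : Countable R[X] :=
  (AddMonoidAlgebra.coeff_injective.comp Polynomial.toFinsupp_injective).countable

instance Polynomial.finite_degreeLT {R : Type*} [Semiring R] [Finite R] (n : ℕ) :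
    Finite (degreeLT R n) :=
  .of_equiv _ (degreeLTEquiv R n).toEquiv.symm

lemma Polynomial.natCard_degreeLT {R : Type*} [Semiring R] (n : ℕ) :
    Nat.card (degreeLT R n) = Nat.card R ^ n := by
  rw [Nat.card_congr (degreeLTEquiv R n).toEquiv, Nat.card_fun, Nat.card_fin]

lemma ENNReal.pow_div_pow_le_rpow {b : ℝ≥0∞} (hb : 1 ≤ b) (hb' : b ≠ ⊤) {m n : ℕ} {x : ℝ}
    (h : (m : ℝ) - n ≤ x) : b ^ m / b ^ n ≤ b ^ x := by
  rw [← ENNReal.rpow_natCast, ← ENNReal.rpow_natCast,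
    ← ENNReal.rpow_sub _ _ (zero_lt_one.trans_le hb).ne' hb']
  exact ENNReal.rpow_le_rpow_of_exponent_le hb h

lemma zabs_exp (q : ℕ) (n : ℤ) : zabs q (exp n) = (q : ℝ) ^ n := by
  rw [zabs, dif_neg exp_ne_zero]
  rfl

lemma zabs_strictMono {q : ℕ} (hq : 1 < q) : StrictMono (zabs q) := by
  intro a b hab
  have hb : b ≠ 0 := ne_bot_of_gt hab
  rcases eq_or_ne a 0 with rfl | ha
  · rw [← exp_log hb, zabs_exp, zabs, dif_pos rfl]
    positivity
  · rw [← exp_log ha, ← exp_log hb, exp_lt_exp] at hab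
    rw [← exp_log ha, ← exp_log hb, zabs_exp, zabs_exp]
    exact zpow_lt_zpow_right₀ (by exact_mod_cast hq) hab

section CompletionAtInfty

variable {k : Type} [Field k] [DecidableEq (RatFunc k)]
  {q : ℕ} {μ : Measure (RatFunc.CompletionAtInfty k)}

local notation "K∞" => RatFunc.CompletionAtInfty k

lemma valued_v_algebraMap (r : RatFunc k) :
    Valued.v (algebraMap (RatFunc k) K∞ r) = RatFunc.inftyValuation k r := by
  let _ := RatFunc.inftyValued k
  exact Valued.valuedCompletion_apply r

lemma polyToInfty_eq (p : k[X]) :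
    polyToInfty k p = algebraMap (RatFunc k) K∞ (algebraMap k[X] (RatFunc k) p) := rfl

lemma polyToInfty_sub (p p' : k[X]) :
    polyToInfty k (p - p') = polyToInfty k p - polyToInfty k p' := by
  simp only [polyToInfty_eq, map_sub]

lemma valued_v_polyToInfty {p : k[X]} (hp : p ≠ 0) :
    Valued.v (polyToInfty k p) = exp (p.natDegree : ℤ) := by
  rw [polyToInfty_eq, valued_v_algebraMap]
  exact RatFunc.inftyValuation.polynomial k hp

lemma valued_v_polyToInfty_div {f g : k[X]} (hf : f ≠ 0) (hg : g ≠ 0) :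
    Valued.v (polyToInfty k f / polyToInfty k g) = exp ((f.natDegree : ℤ) - g.natDegree) := by
  rw [map_div₀, valued_v_polyToInfty hf, valued_v_polyToInfty hg, exp_sub]

lemma valued_v_polyToInfty_div_X_pow {P : k[X]} (hP : P ≠ 0) (m : ℕ) :
    Valued.v (polyToInfty k P / polyToInfty k (X ^ m)) = exp ((P.natDegree : ℤ) - m) := by
  rw [valued_v_polyToInfty_div hP (pow_ne_zero _ X_ne_zero), natDegree_X_pow]

lemma mem_degreeLT_of_valued_v_div_le_one {f g : k[X]} (hg : g ≠ 0)
    (h : Valued.v (polyToInfty k f / polyToInfty k g) ≤ 1) {n : ℕ} (hn : g.natDegree < n) :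
    f ∈ degreeLT k n := by
  rcases eq_or_ne f 0 with rfl | hf
  · exact zero_mem _
  · rw [valued_v_polyToInfty_div hf hg, ← exp_zero, exp_le_exp] at h
    exact mem_degreeLT.2 (degree_le_natDegree.trans_lt (by exact_mod_cast (by omega : _ < n)))

lemma valued_v_surjective : Function.Surjective (Valued.v : K∞ → ℤᵐ⁰) := by
  intro γ
  rcases eq_or_ne γ 0 with rfl | hγ
  · exact ⟨0, map_zero _⟩
  · exact ⟨algebraMap (RatFunc k) K∞ (RatFunc.X ^ log γ), by
      rw [valued_v_algebraMap, RatFunc.inftyValuation.X_zpow, exp_log hγ]⟩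

lemma absInfty_polyToInfty {p : k[X]} (hp : p ≠ 0) :
    absInfty k q (polyToInfty k p) = (q : ℝ) ^ (p.natDegree : ℤ) := by
  rw [absInfty, valued_v_polyToInfty hp, zabs_exp]

lemma Oinfty_eq (hq : 1 < q) : Oinfty k q = {x | Valued.v x ≤ 1} := by
  ext x
  have hone : zabs q 1 = 1 := by rw [← exp_zero, zabs_exp, zpow_zero]
  rw [Oinfty, Set.mem_ofPred_eq, Set.mem_ofPred_eq, absInfty, ← hone,
    (zabs_strictMono hq).le_iff_le]

lemma valued_v_lt_of_absInfty_lt (hq : 1 < q) {x : K∞} {c : ℝ} (hc : 0 ≤ c)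
    (h : absInfty k q x < (q : ℝ) ^ (-c)) : Valued.v x < exp (-(⌊c⌋₊ : ℤ)) := by
  refine (zabs_strictMono hq).lt_iff_lt.1 (h.trans_le ?_)
  rw [zabs_exp, ← Real.rpow_intCast]
  apply Real.rpow_le_rpow_of_exponent_le (by exact_mod_cast hq.le)
  push_cast
  linarith [Nat.floor_le hc]

/-- The ball `|x - c| < q ^ (-m)`: the valuation `Valued.v` is `exp (-ν_∞)`. -/
def valuationBall (c : K∞) (m : ℕ) : Set K∞ := {x | Valued.v (x - c) < exp (-(m : ℤ))}

lemma isOpen_valuationBall (c : K∞) (m : ℕ) : IsOpen (valuationBall c m) := by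
  let _ := WithZeroTopology.topologicalSpace (Γ₀ := ℤᵐ⁰)
  exact WithZeroTopology.isOpen_Iio.preimage
    ((Valued.continuous_valuation_of_surjective valued_v_surjective).comp
      (continuous_sub_right c))

lemma mem_valuationBall_comm {x c : K∞} {m : ℕ} :
    x ∈ valuationBall c m ↔ c ∈ valuationBall x m := by
  simp only [valuationBall, Set.mem_ofPred_eq, Valuation.map_sub_swap]

lemma valued_v_sub_lt_of_mem_valuationBall {x c c' : K∞} {m : ℕ} (hc : x ∈ valuationBall c m)
    (hc' : x ∈ valuationBall c' m) : Valued.v (c - c') < exp (-(m : ℤ)) :=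
  calc Valued.v (c - c') = Valued.v ((x - c') - (x - c)) := by congr 1; ring
    _ ≤ max (Valued.v (x - c')) (Valued.v (x - c)) := Valuation.map_sub _ _ _
    _ < exp (-(m : ℤ)) := max_lt hc' hc

lemma valued_v_le_one_of_mem_valuationBall {x c : K∞} {m : ℕ} (hx : x ∈ valuationBall c m)
    (hc : Valued.v c ≤ 1) : Valued.v x ≤ 1 :=
  calc Valued.v x = Valued.v ((x - c) + c) := by rw [sub_add_cancel]
    _ ≤ max (Valued.v (x - c)) (Valued.v c) := Valuation.map_add _ _ _
    _ ≤ 1 := max_le (hx.le.trans (by rw [← exp_zero, exp_le_exp]; omega)) hc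

lemma IsHaar.isAddRightInvariant (hμ : IsHaar k q μ) : μ.IsAddRightInvariant :=
  ⟨hμ.1⟩

lemma measure_valuationBall [μ.IsAddRightInvariant] (c : K∞) (m : ℕ) :
    μ (valuationBall c m) = μ (valuationBall 0 m) := by
  rw [← measure_preimage_add_right μ (-c) (valuationBall 0 m)]
  congr 1
  ext x
  simp [valuationBall, sub_eq_add_neg]

/-- The balls of radius `q ^ (-m)` around the `q ^ (m + 1)` points `P / t ^ m`, `deg P ≤ m`,
are disjoint and lie in `O_∞`. -/
lemma pow_mul_measure_valuationBall_le [Fintype k] (hq : Fintype.card k = q)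
    [μ.IsAddRightInvariant] (c : K∞) (m : ℕ) :
    (q : ℝ≥0∞) ^ (m + 1) * μ (valuationBall c m) ≤ μ (Oinfty k q) := by
  let center : degreeLT k (m + 1) → K∞ := fun P => polyToInfty k P / polyToInfty k (X ^ m)
  have hcenter_le : ∀ P, Valued.v (center P) ≤ 1 := by
    intro P
    rcases eq_or_ne (P : k[X]) 0 with hP | hP
    · simp [center, hP, polyToInfty_eq]
    · have hdeg : (P : k[X]).natDegree ≤ m :=
        natDegree_le_of_degree_le (Order.le_of_lt_succ (mem_degreeLT.1 P.2))
      rw [valued_v_polyToInfty_div_X_pow hP, ← exp_zero, exp_le_exp]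
      omega
  have hcenter_sep : Pairwise fun P P' => ¬ Valued.v (center P - center P') < exp (-(m : ℤ)) := by
    intro P P' hne
    have hsub : (P : k[X]) - P' ≠ 0 := sub_ne_zero.2 (Subtype.coe_ne_coe.2 hne)
    rw [← sub_div, ← polyToInfty_sub, valued_v_polyToInfty_div_X_pow hsub, exp_lt_exp]
    omega
  have hdisj : Pairwise (Function.onFun Disjoint fun P => valuationBall (center P) m) :=
    fun P P' hne => Set.disjoint_left.2 fun x hx hx' =>
      hcenter_sep hne (valued_v_sub_lt_of_mem_valuationBall hx hx')
  have hsub : ⋃ P, valuationBall (center P) m ⊆ Oinfty k q := by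
    rw [Oinfty_eq (hq ▸ Fintype.one_lt_card)]
    exact Set.iUnion_subset fun P x hx => valued_v_le_one_of_mem_valuationBall hx (hcenter_le P)
  calc (q : ℝ≥0∞) ^ (m + 1) * μ (valuationBall c m)
      = ∑' P, μ (valuationBall (center P) m) := by
        simp only [measure_valuationBall _ m, ENNReal.tsum_const, ENat.card_eq_coe_natCard,
          natCard_degreeLT, Nat.card_eq_fintype_card, hq]
        push_cast
        rfl
    _ = μ (⋃ P, valuationBall (center P) m) :=
        (measure_iUnion hdisj fun P => (isOpen_valuationBall _ m).measurableSet).symm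
    _ ≤ μ (Oinfty k q) := measure_mono hsub

lemma IsHaar.nullSingletonClass [Fintype k] (hq : Fintype.card k = q) (hμ : IsHaar k q μ) :
    NullSingletonClass μ := by
  have := hμ.isAddRightInvariant
  refine ⟨fun x => by_contra fun hx => ?_⟩
  obtain ⟨n, -, hn⟩ := ENNReal.exists_nat_pos_mul_gt hx hμ.2.2.ne
  have hnq : (n : ℝ≥0∞) ≤ (q : ℝ≥0∞) ^ (n + 1) := by
    exact_mod_cast (Nat.lt_pow_self (n := n + 1) (hq ▸ Fintype.one_lt_card)).le.trans'
      n.le_succ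
  have hx_ball : {x} ⊆ valuationBall x n := by simp [valuationBall]
  refine (hn.trans_le ?_).false
  calc (n : ℝ≥0∞) * μ {x} ≤ (q : ℝ≥0∞) ^ (n + 1) * μ (valuationBall x n) :=
        mul_le_mul' hnq (measure_mono hx_ball)
    _ ≤ μ (Oinfty k q) := pow_mul_measure_valuationBall_le hq x n

variable (k) in
def ratPoints : Set K∞ :=
  Set.range fun p : k[X] × k[X] => polyToInfty k p.1 / polyToInfty k p.2

lemma measure_ratPoints [Fintype k] (hq : Fintype.card k = q) (hμ : IsHaar k q μ) :
    μ (ratPoints k) = 0 :=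
  have := hμ.nullSingletonClass hq
  (Set.countable_range _).measure_zero μ

lemma exists_le_natDegree_of_tendsto [Finite k] {α : K∞} (hα : Valued.v α ≤ 1)
    (hirr : α ∉ ratPoints k) {f g : ℕ → k[X]} (hg : ∀ n, g n ≠ 0)
    (hlim : Tendsto (fun n => polyToInfty k (f n) / polyToInfty k (g n)) atTop (nhds α))
    (D : ℕ) : ∃ n, D ≤ (g n).natDegree := by
  by_contra! hD
  let S : Set K∞ := Set.range fun i : degreeLT k D × degreeLT k D =>
    polyToInfty k i.1 / polyToInfty k i.2
  have hnear : ∀ᶠ n in atTop, polyToInfty k (f n) / polyToInfty k (g n) ∈ valuationBall α 0 :=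
    hlim.eventually ((isOpen_valuationBall α 0).mem_nhds (by simp [valuationBall]))
  have hS : ∀ᶠ n in atTop, polyToInfty k (f n) / polyToInfty k (g n) ∈ S := by
    filter_upwards [hnear] with n hn
    have hv := valued_v_le_one_of_mem_valuationBall hn hα
    exact ⟨(⟨f n, mem_degreeLT_of_valued_v_div_le_one (hg n) hv (hD n)⟩,
      ⟨g n, mem_degreeLT.2 (degree_le_natDegree.trans_lt (by exact_mod_cast hD n))⟩), rfl⟩
  obtain ⟨i, hi⟩ := (Set.finite_range _).isClosed.mem_of_tendsto hlim hS
  exact hirr ⟨(i.1, i.2), hi⟩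

variable (k) in
/-- The set `A_e`: the union of the balls `|x - f/g| < q ^ (-⌊M + ρ e⌋₊)` over
`deg f, deg g ≤ e`. -/
def approxSet (M : ℤ) (ρ : ℝ) (e : ℕ) : Set K∞ :=
  ⋃ i : degreeLT k (e + 1) × degreeLT k (e + 1),
    valuationBall (polyToInfty k i.1 / polyToInfty k i.2) ⌊M + ρ * e⌋₊

lemma mem_approxSet (hq : 1 < q) {M : ℤ} {ρ : ℝ} {α : K∞} (hα : Valued.v α ≤ 1) {f g : k[X]}
    (hg : g ≠ 0) (hpos : 0 ≤ M + ρ * g.natDegree)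
    (h : absInfty k q (α - polyToInfty k f / polyToInfty k g) <
      (q : ℝ) ^ (-M) / absInfty k q (polyToInfty k g) ^ ρ) :
    α ∈ approxSet k M ρ g.natDegree := by
  have hq0 : (0 : ℝ) < q := by positivity
  have hbound : (q : ℝ) ^ (-M) / absInfty k q (polyToInfty k g) ^ ρ =
      (q : ℝ) ^ (-(M + ρ * g.natDegree)) := by
    rw [absInfty_polyToInfty hg, ← Real.rpow_intCast, ← Real.rpow_intCast, ← Real.rpow_mul hq0.le,
      ← Real.rpow_sub hq0]
    push_cast
    ring_nf
  rw [hbound] at h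
  have hball : α ∈ valuationBall (polyToInfty k f / polyToInfty k g) ⌊M + ρ * g.natDegree⌋₊ :=
    valued_v_lt_of_absInfty_lt hq hpos h
  have hv := valued_v_le_one_of_mem_valuationBall (mem_valuationBall_comm.1 hball) hα
  exact Set.mem_iUnion.2 ⟨(⟨f, mem_degreeLT_of_valued_v_div_le_one hg hv (Nat.lt_succ_self _)⟩,
    ⟨g, mem_degreeLT.2 (degree_le_natDegree.trans_lt (by exact_mod_cast Nat.lt_succ_self _))⟩),
    hball⟩

lemma measure_approxSet_le [Fintype k] (hq : Fintype.card k = q) [μ.IsAddRightInvariant]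
    (M : ℤ) (ρ : ℝ) (e : ℕ) : μ (approxSet k M ρ e) ≤
      μ (Oinfty k q) * (q : ℝ≥0∞) ^ ((2 : ℝ) - M) * ((q : ℝ≥0∞) ^ ((2 : ℝ) - ρ)) ^ e := by
  set m := ⌊M + ρ * e⌋₊
  have hq1 : (1 : ℝ≥0∞) ≤ q := by exact_mod_cast (hq ▸ Fintype.card_pos : 0 < q)
  have hq0 : (q : ℝ≥0∞) ^ (m + 1) ≠ 0 := pow_ne_zero _ (zero_lt_one.trans_le hq1).ne'
  have hball : μ (valuationBall 0 m) ≤ μ (Oinfty k q) / (q : ℝ≥0∞) ^ (m + 1) :=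
    (ENNReal.le_div_iff_mul_le (.inl hq0) (.inl (by simp))).2
      (by rw [mul_comm]; exact pow_mul_measure_valuationBall_le hq 0 m)
  have hexp : ((2 * (e + 1) : ℕ) : ℝ) - (m + 1 : ℕ) ≤ (2 - M) + (2 - ρ) * e := by
    have := Nat.lt_floor_add_one ((M : ℝ) + ρ * e)
    push_cast
    linarith
  calc μ (approxSet k M ρ e)
      ≤ ∑' _ : degreeLT k (e + 1) × degreeLT k (e + 1), μ (valuationBall 0 m) := by
        refine (measure_iUnion_le _).trans (ENNReal.tsum_le_tsum fun i => ?_)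
        rw [measure_valuationBall]
    _ = (q : ℝ≥0∞) ^ (2 * (e + 1)) * μ (valuationBall 0 m) := by
        simp only [ENNReal.tsum_const, ENat.card_eq_coe_natCard, Nat.card_prod, natCard_degreeLT,
          Nat.card_eq_fintype_card, hq]
        push_cast
        ring
    _ ≤ μ (Oinfty k q) * ((q : ℝ≥0∞) ^ (2 * (e + 1)) / (q : ℝ≥0∞) ^ (m + 1)) := by
        refine (mul_le_mul_right hball _).trans_eq ?_
        simp only [div_eq_mul_inv]
        ring
    _ ≤ μ (Oinfty k q) * (q : ℝ≥0∞) ^ ((2 - M) + (2 - ρ) * e) := by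
        gcongr
        exact ENNReal.pow_div_pow_le_rpow hq1 (by simp) hexp
    _ = μ (Oinfty k q) * (q : ℝ≥0∞) ^ ((2 : ℝ) - M) * ((q : ℝ≥0∞) ^ ((2 : ℝ) - ρ)) ^ e := by
        rw [ENNReal.rpow_add _ _ (zero_lt_one.trans_le hq1).ne' (by simp), ENNReal.rpow_mul,
          ENNReal.rpow_natCast, mul_assoc]

lemma tsum_measure_approxSet_ne_top [Fintype k] (hq : Fintype.card k = q) (hμ : IsHaar k q μ)
    (M : ℤ) {ρ : ℝ} (hρ : 2 < ρ) : ∑' e, μ (approxSet k M ρ e) ≠ ⊤ := by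
  have := hμ.isAddRightInvariant
  have hq1 : (1 : ℝ≥0∞) < q := by exact_mod_cast (hq ▸ Fintype.one_lt_card : 1 < q)
  have hr : (q : ℝ≥0∞) ^ ((2 : ℝ) - ρ) < 1 :=
    ENNReal.rpow_lt_one_of_one_lt_of_neg hq1 (by linarith)
  refine ne_top_of_le_ne_top ?_ (ENNReal.tsum_le_tsum (measure_approxSet_le hq M ρ))
  rw [ENNReal.tsum_mul_left, ENNReal.tsum_geometric]
  refine ENNReal.mul_ne_top (ENNReal.mul_ne_top hμ.2.2.ne ?_)
    (ENNReal.inv_ne_top.2 (tsub_pos_of_lt hr).ne')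
  exact ENNReal.rpow_ne_top_of_ne_zero (zero_lt_one.trans hq1).ne' (by simp)

variable (k) in
/-- The set `Φ_{M,ρ}` of the theorem. -/
def approximableSet (q : ℕ) (M : ℤ) (ρ : ℝ) : Set K∞ :=
  {α | α ∈ Oinfty k q ∧
      ∃ f g : ℕ → Polynomial k,
        (∀ n, g n ≠ 0 ∧
          absInfty k q (α - polyToInfty k (f n) / polyToInfty k (g n)) <
            (q : ℝ) ^ (-M) / absInfty k q (polyToInfty k (g n)) ^ ρ) ∧
        Tendsto (fun n => polyToInfty k (f n) / polyToInfty k (g n)) atTop (nhds α)}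

lemma approximableSet_subset [Finite k] (hq : 1 < q) (M : ℤ) {ρ : ℝ} (hρ : 0 < ρ) :
    approximableSet k q M ρ ⊆ ratPoints k ∪ limsup (approxSet k M ρ) atTop := by
  rintro α ⟨hO, f, g, happrox, hlim⟩
  rw [Oinfty_eq hq] at hO
  refine or_iff_not_imp_left.2 fun hirr => ?_
  obtain ⟨E₀, hE₀⟩ := eventually_atTop.1 <|
    (tendsto_atTop_add_const_left _ (M : ℝ) <|
      tendsto_natCast_atTop_atTop.const_mul_atTop hρ).eventually_ge_atTop 0
  rw [mem_limsup_iff_frequently_mem, frequently_atTop]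
  intro E
  obtain ⟨n, hn⟩ := exists_le_natDegree_of_tendsto hO hirr (fun n => (happrox n).1) hlim (max E E₀)
  exact ⟨_, le_of_max_le_left hn,
    mem_approxSet hq hO (happrox n).1 (hE₀ _ (le_of_max_le_right hn)) (happrox n).2⟩

end CompletionAtInfty

/-- Theorem 1.2 for `A = F_q[t]`: for `ρ > 2` and any integer `M`, the set
`Φ_{M,ρ}` of `α ∈ O_∞` admitting a sequence `f_n/g_n → α` with
`|α - f_n/g_n| < q^(-M)/|g_n|^ρ` is null for every Haar measure. -/
theorem null_measure_of_rho_approximable (q : ℕ) (hq : Fintype.card Fq = q)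
    (M : ℤ) (ρ : ℝ) (hρ : 2 < ρ)
    (μ : Measure (RatFunc.CompletionAtInfty Fq)) (hμ : IsHaar Fq q μ) :
    μ {α : RatFunc.CompletionAtInfty Fq | α ∈ Oinfty Fq q ∧
      ∃ f g : ℕ → Polynomial Fq,
        (∀ n, g n ≠ 0 ∧
          absInfty Fq q (α - polyToInfty Fq (f n) / polyToInfty Fq (g n)) <
            (q : ℝ) ^ (-M) / absInfty Fq q (polyToInfty Fq (g n)) ^ ρ) ∧
        Tendsto (fun n => polyToInfty Fq (f n) / polyToInfty Fq (g n)) atTop (nhds α)} = 0 :=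
  measure_mono_null (approximableSet_subset (hq ▸ Fintype.one_lt_card) M (by linarith))
    (measure_union_null (measure_ratPoints hq hμ)
      (measure_limsup_atTop_eq_zero (tsum_measure_approxSet_ne_top hq hμ M hρ)))
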